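/- arXiv:2002.12139 — 2 statements merged into one kernel-verified Lean document; each statement's English description precedes it below -/
import Mathlib

section
/- If n = p^k m^2 is an odd perfect number with special prime p, then s(m^2)/(D(p^k)/2) = gcd(m^2, σ(m^2)). -/
def D (z : ℕ) : ℕ := 2 * z - ArithmeticFunction.sigma 1 z

def s (z : ℕ) : ℕ := ArithmeticFunction.sigma 1 z - z

/-!
Write `σ(p^k) = 2u` (it is even since `p` and `k` are odd). As `σ(p^k) ≡ 1 (mod p)` is coprime
to `p^k`, the identity `σ(p^k) σ(m²) = 2 p^k m²` forces `σ(m²) = p^k c` and `m² = u c`. Hence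
`gcd(m², σ(m²)) = c` (because `p^k` is coprime to `m²`), while
`s(m²) = (p^k - u) c = (D(p^k)/2) c`, and `p^k - u > 0` as prime powers are deficient.
-/

open ArithmeticFunction
open scoped ArithmeticFunction.sigma

theorem Nat.Deficient.sigma_one_lt {n : ℕ} (h : n.Deficient) : σ 1 n < 2 * n := by
  rw [sigma_one_apply, Nat.sum_divisors_eq_sum_properDivisors_add_self]
  unfold Nat.Deficient at h
  omega

theorem Nat.Prime.even_sigma_one_pow {p k : ℕ} (hp : p.Prime) (hpo : Odd p) (hk : Odd k) :
    Even (σ 1 (p ^ k)) := by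
  rw [← ZMod.natCast_eq_zero_iff_even, sigma_one_apply_prime_pow hp]
  push_cast
  simp only [(ZMod.natCast_eq_one_iff_odd).mpr hpo, one_pow, Finset.sum_const, Finset.card_range,
    nsmul_eq_mul, mul_one]
  exact_mod_cast (ZMod.natCast_eq_zero_iff_even).mpr hk.add_one

theorem Nat.Prime.coprime_pow_sigma_one_pow {p k : ℕ} (hp : p.Prime) :
    Nat.Coprime (p ^ k) (σ 1 (p ^ k)) := by
  refine Nat.Coprime.pow_left _ ((Nat.Prime.coprime_iff_not_dvd hp).mpr ?_)
  have := Fact.mk hp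
  rw [← ZMod.natCast_eq_zero_iff, sigma_one_apply_prime_pow hp, Finset.sum_range_succ']
  simp

theorem s_div_half_D_eq_gcd_of_perfect {a b : ℕ} (hab : a.Coprime b) (ha : a.Coprime (σ 1 a))
    (heven : Even (σ 1 a)) (hdef : σ 1 a < 2 * a) (hperf : σ 1 (a * b) = 2 * (a * b)) :
    s b / (D a / 2) = b.gcd (σ 1 b) := by
  obtain ⟨u, hu⟩ := heven
  have hmul : σ 1 b * σ 1 a = 2 * (a * b) := by
    rw [mul_comm, ← isMultiplicative_sigma.map_mul_of_coprime hab, hperf]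
  obtain ⟨c, hc⟩ : a ∣ σ 1 b := ha.dvd_of_dvd_mul_right ⟨2 * b, by rw [hmul]; ring⟩
  have hb : b = u * c := by
    have h : a * (2 * b) = a * (2 * (u * c)) := by rw [hc, hu] at hmul; linarith
    have := Nat.eq_of_mul_eq_mul_left (by omega) h
    omega
  have hgcd : b.gcd (σ 1 b) = c := by
    rw [hc, Nat.Coprime.gcd_mul_left_cancel_right c hab, hb, Nat.gcd_mul_left_left]
  have hD : D a / 2 = a - u := by unfold D; omega
  have hs : s b = (a - u) * c := by rw [s, hc, hb, Nat.sub_mul]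
  rw [hgcd, hD, hs, Nat.mul_div_cancel_left _ (by omega)]

theorem stmt_2_general (p k m : ℕ) (hp : p.Prime) (hk1 : k % 4 = 1) (hp1 : p % 4 = 1)
    (hco : Nat.Coprime p m)
    (hperf : ArithmeticFunction.sigma 1 (p ^ k * m ^ 2) = 2 * (p ^ k * m ^ 2)) :
    s (m ^ 2) / (D (p ^ k) / 2) = Nat.gcd (m ^ 2) (ArithmeticFunction.sigma 1 (m ^ 2)) :=
  s_div_half_D_eq_gcd_of_perfect (hco.pow _ _) hp.coprime_pow_sigma_one_pow
    (hp.even_sigma_one_pow (Nat.odd_iff.mpr (by omega)) (Nat.odd_iff.mpr (by omega)))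
    hp.deficient_pow.sigma_one_lt hperf

theorem stmt_2 (p k m : ℕ) (hp : p.Prime) (hk1 : k % 4 = 1) (hp1 : p % 4 = 1)
    (hm : 0 < m) (hco : Nat.Coprime p m) (hodd : Odd (p ^ k * m ^ 2))
    (hperf : ArithmeticFunction.sigma 1 (p ^ k * m ^ 2) = 2 * (p ^ k * m ^ 2)) :
    s (m ^ 2) / (D (p ^ k) / 2) = Nat.gcd (m ^ 2) (ArithmeticFunction.sigma 1 (m ^ 2)) :=
  stmt_2_general p k m hp hk1 hp1 hco hperf
end

section
/- If n = p^k m^2 is an odd perfect number with special prime p and σ(m^2)/p^k is a perfect square, then σ(m^2) ≡ 1 (mod 4) and consequently p ≡ k (mod 8). -/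
/-!
Write `σ(m²) = p^k c²`. Cancelling `p^k` in `σ(p^k) σ(m²) = 2 p^k m²` gives `σ(p^k) c² = 2 m²`
with `m` odd, so `c` is odd, `c ∣ m` and `σ(p^k) = 2 d²` with `d` odd. Odd squares are `1 mod 8`,
so `σ(m²) ≡ p^k ≡ 1 (mod 4)` and `σ(p^k) ≡ 2 (mod 8)`. Pairing consecutive terms of the geometric
sum gives `σ(p^k) ≡ (1 + p)(k + 1)/2 (mod 8)`, and for `p ≡ k ≡ 1 (mod 4)` this is `2`
exactly when `p ≡ k (mod 8)`.
-/

open Finset ArithmeticFunction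
open scoped ArithmeticFunction.sigma

lemma Nat.sq_mod_eight_of_odd {d : ℕ} (hd : Odd d) : d ^ 2 % 8 = 1 := by
  have h2 : d % 2 = 1 := Nat.odd_iff.mp hd
  have h8 : d % 8 < 8 := Nat.mod_lt d (by norm_num)
  rw [Nat.pow_mod]
  interval_cases h : d % 8 <;> omega

theorem geom_sum_range_two_mul {R : Type*} [CommSemiring R] (x : R) (n : ℕ) :
    ∑ i ∈ range (2 * n), x ^ i = (1 + x) * ∑ i ∈ range n, (x ^ 2) ^ i := by
  induction n with
  | zero => simp
  | succ n ih =>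
    rw [show 2 * (n + 1) = 2 * n + 1 + 1 by ring, sum_range_succ, sum_range_succ, ih,
      sum_range_succ]
    ring

lemma Nat.geom_sum_range_two_mul_mod_eight {p : ℕ} (hp : Odd p) (n : ℕ) :
    (∑ i ∈ range (2 * n), p ^ i) % 8 = (1 + p) * n % 8 := by
  have hsq : p ^ 2 ≡ 1 [MOD 8] := Nat.sq_mod_eight_of_odd hp
  have hsum : ∑ i ∈ range n, (p ^ 2) ^ i ≡ n [MOD 8] := by
    calc ∑ i ∈ range n, (p ^ 2) ^ i ≡ ∑ _i ∈ range n, 1 ^ _i [MOD 8] :=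
          Nat.ModEq.sum fun i _ => hsq.pow i
      _ = n := by simp
  rw [geom_sum_range_two_mul]
  exact hsum.mul_left _

lemma Nat.Prime.coprime_sigma_one_pow {p : ℕ} (hp : p.Prime) (k : ℕ) :
    Nat.Coprime p (σ 1 (p ^ k)) := by
  rw [sigma_one_apply_prime_pow hp, sum_range_succ', pow_zero]
  simp_rw [pow_succ', ← mul_sum, Nat.coprime_mul_left_add_right]
  exact Nat.coprime_one_right p

lemma Nat.odd_of_mul_sq_eq_two_mul_sq {a c m : ℕ} (hm : Odd m) (h : a * c ^ 2 = 2 * m ^ 2) :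
    Odd c := by
  by_contra hc
  obtain ⟨e, rfl⟩ := Nat.not_odd_iff_even.mp hc
  have : Even (m ^ 2) := ⟨a * e ^ 2, by linarith⟩
  exact Nat.not_even_iff_odd.mpr hm.pow this

lemma Nat.exists_odd_eq_two_mul_sq {a c m : ℕ} (hm : Odd m) (h : a * c ^ 2 = 2 * m ^ 2) :
    ∃ d, Odd d ∧ a = 2 * d ^ 2 := by
  have hc := Nat.odd_of_mul_sq_eq_two_mul_sq hm h
  have hcm : c ∣ m := by
    have : c ^ 2 ∣ 2 * m ^ 2 := ⟨a, by rw [← h, mul_comm]⟩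
    exact (Nat.pow_dvd_pow_iff two_ne_zero).mp
      ((hc.coprime_two_right.pow_left 2).dvd_of_dvd_mul_left this)
  obtain ⟨d, rfl⟩ := hcm
  refine ⟨d, (Nat.odd_mul.mp hm).2, ?_⟩
  have hc0 : c ^ 2 ≠ 0 := pow_ne_zero 2 hc.pos.ne'
  exact Nat.eq_of_mul_eq_mul_right (Nat.pos_of_ne_zero hc0) (by rw [h]; ring)

lemma Nat.mod_eight_eq_of_one_add_mul_half_succ_eq_two {p k : ℕ} (hp : p % 4 = 1) (hk : k % 4 = 1)
    (h : (1 + p) * ((k + 1) / 2) % 8 = 2) : p % 8 = k % 8 := by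
  obtain ⟨s, rfl⟩ : ∃ s, p = 4 * s + 1 := ⟨p / 4, by omega⟩
  obtain ⟨j, rfl⟩ : ∃ j, k = 4 * j + 1 := ⟨k / 4, by omega⟩
  have : (1 + (4 * s + 1)) * ((4 * j + 1 + 1) / 2) = 8 * (s * j) + 4 * s + 4 * j + 2 := by
    rw [show (4 * j + 1 + 1) / 2 = 2 * j + 1 by omega]; ring
  omega

lemma Nat.Prime.sigma_one_pow_mod_eight {p k : ℕ} (hp : p.Prime) (hp2 : Odd p) (hk : Odd k) :
    σ 1 (p ^ k) % 8 = (1 + p) * ((k + 1) / 2) % 8 := by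
  obtain ⟨j, rfl⟩ := hk
  rw [sigma_one_apply_prime_pow hp, show 2 * j + 1 + 1 = 2 * (j + 1) by ring,
    Nat.mul_div_cancel_left _ two_pos]
  exact Nat.geom_sum_range_two_mul_mod_eight hp2 _

theorem stmt_18_general (p k m : ℕ) (hp : p.Prime) (hk1 : k % 4 = 1) (hp1 : p % 4 = 1)
    (hco : Nat.Coprime p m) (hodd : Odd (p ^ k * m ^ 2))
    (hperf : ArithmeticFunction.sigma 1 (p ^ k * m ^ 2) = 2 * (p ^ k * m ^ 2))
    (hsq : IsSquare (ArithmeticFunction.sigma 1 (m ^ 2) / p ^ k)) :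
    ArithmeticFunction.sigma 1 (m ^ 2) % 4 = 1 ∧ p % 8 = k % 8 := by
  have hm : Odd m := (Nat.odd_pow_iff two_ne_zero).mp (Nat.odd_mul.mp hodd).2
  have hmul : σ 1 (p ^ k) * σ 1 (m ^ 2) = 2 * (p ^ k * m ^ 2) := by
    rw [← isMultiplicative_sigma.map_mul_of_coprime (hco.pow k 2), hperf]
  have hdvd : p ^ k ∣ σ 1 (m ^ 2) :=
    ((hp.coprime_sigma_one_pow k).pow_left k).dvd_of_dvd_mul_left (hmul ▸ ⟨2 * m ^ 2, by ring⟩)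
  obtain ⟨c, hc⟩ := hsq
  have hB : σ 1 (m ^ 2) = p ^ k * c ^ 2 := by rw [← Nat.mul_div_cancel' hdvd, hc, sq]
  have hAc : σ 1 (p ^ k) * c ^ 2 = 2 * m ^ 2 := by
    refine Nat.eq_of_mul_eq_mul_left (pow_pos hp.pos k) ?_
    rw [← mul_assoc, mul_comm (p ^ k), mul_assoc, ← hB, hmul]; ring
  obtain ⟨d, hd, hA⟩ := Nat.exists_odd_eq_two_mul_sq hm hAc
  constructor
  · have hpk : p ^ k ≡ 1 [MOD 4] := by simpa using (show p ≡ 1 [MOD 4] from hp1).pow k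
    have hc2 : c ^ 2 ≡ 1 [MOD 4] :=
      Nat.ModEq.of_mul_left 2 (Nat.sq_mod_eight_of_odd (Nat.odd_of_mul_sq_eq_two_mul_sq hm hAc))
    rw [hB]
    exact hpk.mul hc2
  · apply Nat.mod_eight_eq_of_one_add_mul_half_succ_eq_two hp1 hk1
    rw [← hp.sigma_one_pow_mod_eight (Nat.odd_iff.mpr (by omega)) (Nat.odd_iff.mpr (by omega)),
      hA, Nat.mul_mod, Nat.sq_mod_eight_of_odd hd]

theorem stmt_18 (p k m : ℕ) (hp : p.Prime) (hk1 : k % 4 = 1) (hp1 : p % 4 = 1)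
    (hm : 0 < m) (hco : Nat.Coprime p m) (hodd : Odd (p ^ k * m ^ 2))
    (hperf : ArithmeticFunction.sigma 1 (p ^ k * m ^ 2) = 2 * (p ^ k * m ^ 2))
    (hsq : IsSquare (ArithmeticFunction.sigma 1 (m ^ 2) / p ^ k)) :
    ArithmeticFunction.sigma 1 (m ^ 2) % 4 = 1 ∧ p % 8 = k % 8 :=
  stmt_18_general p k m hp hk1 hp1 hco hodd hperf hsq
end
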